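/- arXiv:1509.06772 — 3 statements merged into one kernel-verified Lean document; each statement's English description precedes it below -/
import Mathlib

section
/- Let $(M, \mathcal{B})$ be a measurable space, $\nu_\varepsilon, \nu_0$ probability measures on $M$ absolutely continuous with respect to a measure $m$, with densities $\rho_\varepsilon, \rho_0$, and let $R_\varepsilon = \int_M |\rho_\varepsilon - \rho_0|\, dm$. Let $z_\varepsilon : M \to [0, 2L]$ be measurable with $\int_M z_\varepsilon^q\, d\nu_\varepsilon \leq C^q \int_M (\delta_\varepsilon + S_\varepsilon)^q\, d\nu_\varepsilon$ for some measurable $\delta_\varepsilon : M \to [0, 4L]$ and constant $S_\varepsilon \leq L R_\varepsilon + \varepsilon$. Then $\left( \int_M z_\varepsilon^q\, d\nu_0 \right)^{1/q} \leq 24 L e^{2L} \left( \left( \int_M \delta_\varepsilon^q\, d\nu_\varepsilon \right)^{1/q} + R_\varepsilon^{1/q} + \varepsilon \right)$, where one may take $C = 12 e^{2L}$ and $q \geq 1$, $L \geq 1$. -/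
/-!
Against the reference measure `m`, moving from `νε` to `ν0` changes `∫ z ^ q` by at most
`‖z ^ q‖_∞ ∫ |ρε - ρ0| dm ≤ (2L) ^ q Rε`; after taking `q`-th roots and using subadditivity of
`t ↦ t ^ (1 / q)` this costs `2L Rε ^ (1 / q)`. Minkowski's inequality turns the hypothesis into
`‖z‖_{L^q(νε)} ≤ C (‖δ‖_{L^q(νε)} + Sε)`, and for `Rε ≤ 1` we have `L Rε ≤ L Rε ^ (1 / q)`.
For `Rε > 1` the trivial bound `‖z‖_{L^q(ν0)} ≤ 2L` suffices, since then `Rε ^ (1 / q) ≥ 1`.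
-/

open MeasureTheory

lemma rpow_mul_rpow_one_div {K b q : ℝ} (hK : 0 ≤ K) (hb : 0 ≤ b) (hq : q ≠ 0) :
    (K ^ q * b) ^ (1 / q) = K * b ^ (1 / q) := by
  rw [Real.mul_rpow (Real.rpow_nonneg hK q) hb, ← Real.rpow_mul hK, mul_one_div_cancel hq,
    Real.rpow_one]

lemma rpow_one_div_le_add_mul_rpow_one_div {a b K R q : ℝ} (ha : 0 ≤ a) (hb : 0 ≤ b)
    (hK : 0 ≤ K) (hR : 0 ≤ R) (hq : 1 ≤ q) (h : a ≤ b + K ^ q * R) :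
    a ^ (1 / q) ≤ b ^ (1 / q) + K * R ^ (1 / q) := by
  have hq0 : 0 < q := by linarith
  calc a ^ (1 / q) ≤ (b + K ^ q * R) ^ (1 / q) := Real.rpow_le_rpow ha h (by positivity)
    _ ≤ b ^ (1 / q) + (K ^ q * R) ^ (1 / q) :=
      Real.rpow_add_le_add_rpow hb (mul_nonneg (Real.rpow_nonneg hK q) hR) (by positivity)
        ((div_le_one hq0).2 hq)
    _ = b ^ (1 / q) + K * R ^ (1 / q) := by rw [rpow_mul_rpow_one_div hK hR hq0.ne']

section WithDensity

variable {M : Type*} [MeasurableSpace M] {m : Measure M} {ρ ρ' : M → ℝ}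

lemma integrable_of_isFiniteMeasure_withDensity_ofReal (hρ : AEStronglyMeasurable ρ m)
    (hρ0 : ∀ x, 0 ≤ ρ x) [IsFiniteMeasure (m.withDensity fun x => ENNReal.ofReal (ρ x))] :
    Integrable ρ m := by
  refine ⟨hρ, (hasFiniteIntegral_iff_ofReal (ae_of_all _ hρ0)).2 ?_⟩
  simpa [withDensity_apply _ MeasurableSet.univ] using
    measure_lt_top (m.withDensity fun x => ENNReal.ofReal (ρ x)) Set.univ

lemma integral_withDensity_ofReal {E : Type*} [NormedAddCommGroup E] [NormedSpace ℝ E]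
    (hρ : Measurable ρ) (hρ0 : ∀ x, 0 ≤ ρ x) (g : M → E) :
    ∫ x, g x ∂m.withDensity (fun x => ENNReal.ofReal (ρ x)) = ∫ x, ρ x • g x ∂m := by
  rw [integral_withDensity_eq_integral_toReal_smul hρ.ennreal_ofReal
    (ae_of_all _ fun _ => ENNReal.ofReal_lt_top)]
  simp_rw [ENNReal.toReal_ofReal (hρ0 _)]

lemma integral_withDensity_ofReal_le_add_mul_integral_abs_sub (hρ : Measurable ρ)
    (hρ' : Measurable ρ') (hρ0 : ∀ x, 0 ≤ ρ x) (hρ'0 : ∀ x, 0 ≤ ρ' x)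
    (hρi : Integrable ρ m) (hρ'i : Integrable ρ' m) {g : M → ℝ}
    (hg : AEStronglyMeasurable g m) {K : ℝ} (hgK : ∀ x, ‖g x‖ ≤ K) :
    ∫ x, g x ∂m.withDensity (fun x => ENNReal.ofReal (ρ' x)) ≤
      ∫ x, g x ∂m.withDensity (fun x => ENNReal.ofReal (ρ x)) +
        K * ∫ x, |ρ x - ρ' x| ∂m := by
  simp only [integral_withDensity_ofReal hρ hρ0, integral_withDensity_ofReal hρ' hρ'0,
    smul_eq_mul]
  have hbdd : ∀ᵐ x ∂m, ‖g x‖ ≤ K := ae_of_all _ hgK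
  have hdiff : Integrable (fun x => |ρ x - ρ' x|) m := (hρi.sub hρ'i).abs
  rw [← integral_const_mul, ← integral_add (hρi.mul_bdd hg hbdd) (hdiff.const_mul K)]
  refine integral_mono (hρ'i.mul_bdd hg hbdd)
    ((hρi.mul_bdd hg hbdd).add (hdiff.const_mul K)) fun x => ?_
  have hcross : (ρ' x - ρ x) * g x ≤ K * |ρ x - ρ' x| := calc
    (ρ' x - ρ x) * g x ≤ |ρ' x - ρ x| * |g x| := by rw [← abs_mul]; exact le_abs_self _
    _ ≤ |ρ' x - ρ x| * K :=
      mul_le_mul_of_nonneg_left (Real.norm_eq_abs _ ▸ hgK x) (abs_nonneg _)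
    _ = K * |ρ x - ρ' x| := by rw [abs_sub_comm, mul_comm]
  linarith

lemma rpow_one_div_integral_rpow_withDensity_ofReal_le_add (hρ : Measurable ρ)
    (hρ' : Measurable ρ') (hρ0 : ∀ x, 0 ≤ ρ x) (hρ'0 : ∀ x, 0 ≤ ρ' x)
    [IsFiniteMeasure (m.withDensity fun x => ENNReal.ofReal (ρ x))]
    [IsFiniteMeasure (m.withDensity fun x => ENNReal.ofReal (ρ' x))] {g : M → ℝ}
    (hg : AEMeasurable g m) {K q : ℝ} (hK : 0 ≤ K)
    (hgK : ∀ x, g x ∈ Set.Icc 0 K) (hq : 1 ≤ q) :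
    (∫ x, g x ^ q ∂m.withDensity (fun x => ENNReal.ofReal (ρ' x))) ^ (1 / q) ≤
      (∫ x, g x ^ q ∂m.withDensity (fun x => ENNReal.ofReal (ρ x))) ^ (1 / q) +
        K * (∫ x, |ρ x - ρ' x| ∂m) ^ (1 / q) := by
  have hgq : ∀ x, ‖g x ^ q‖ ≤ K ^ q := fun x => by
    rw [Real.norm_of_nonneg (Real.rpow_nonneg (hgK x).1 q)]
    exact Real.rpow_le_rpow (hgK x).1 (hgK x).2 (by linarith)
  exact rpow_one_div_le_add_mul_rpow_one_div
    (integral_nonneg fun x => Real.rpow_nonneg (hgK x).1 q)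
    (integral_nonneg fun x => Real.rpow_nonneg (hgK x).1 q)
    hK (integral_nonneg fun _ => abs_nonneg _) hq
    (integral_withDensity_ofReal_le_add_mul_integral_abs_sub hρ hρ' hρ0 hρ'0
      (integrable_of_isFiniteMeasure_withDensity_ofReal hρ.aestronglyMeasurable hρ0)
      (integrable_of_isFiniteMeasure_withDensity_ofReal hρ'.aestronglyMeasurable hρ'0)
      (hg.pow_const q).aestronglyMeasurable hgq)

end WithDensity

section Lp

variable {M : Type*} [MeasurableSpace M] {μ : Measure M}

lemma integral_rpow_add_le {f g : M → ℝ} {q : ℝ} (hq : 1 ≤ q)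
    (hf : MemLp f (ENNReal.ofReal q) μ) (hg : MemLp g (ENNReal.ofReal q) μ)
    (hf0 : ∀ x, 0 ≤ f x) (hg0 : ∀ x, 0 ≤ g x) :
    (∫ x, (f x + g x) ^ q ∂μ) ^ (1 / q) ≤
      (∫ x, f x ^ q ∂μ) ^ (1 / q) + (∫ x, g x ^ q ∂μ) ^ (1 / q) := by
  have hp0 : ENNReal.ofReal q ≠ 0 := by rw [Ne, ENNReal.ofReal_eq_zero]; linarith
  have key := eLpNorm_add_le (p := ENNReal.ofReal q) hf.1 hg.1 (ENNReal.one_le_ofReal.2 hq)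
  rw [(hf.add hg).eLpNorm_eq_integral_rpow_norm hp0 ENNReal.ofReal_ne_top,
    hf.eLpNorm_eq_integral_rpow_norm hp0 ENNReal.ofReal_ne_top,
    hg.eLpNorm_eq_integral_rpow_norm hp0 ENNReal.ofReal_ne_top,
    ← ENNReal.ofReal_add (by positivity) (by positivity),
    ENNReal.ofReal_le_ofReal_iff (by positivity), ENNReal.toReal_ofReal (by linarith)] at key
  have hfg0 : ∀ x, 0 ≤ f x + g x := fun x => add_nonneg (hf0 x) (hg0 x)
  simpa [abs_of_nonneg, hf0, hg0, hfg0, one_div] using key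

lemma integral_rpow_add_const_le [IsProbabilityMeasure μ] {f : M → ℝ} {q : ℝ} (hq : 1 ≤ q)
    (hf : MemLp f (ENNReal.ofReal q) μ)
    (hf0 : ∀ x, 0 ≤ f x) {c : ℝ} (hc : 0 ≤ c) :
    (∫ x, (f x + c) ^ q ∂μ) ^ (1 / q) ≤ (∫ x, f x ^ q ∂μ) ^ (1 / q) + c := by
  have h := integral_rpow_add_le hq hf (memLp_const c) hf0 fun _ => hc
  rwa [integral_const, probReal_univ, one_smul, ← Real.rpow_mul hc,
    mul_one_div_cancel (by linarith), Real.rpow_one] at h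

lemma rpow_one_div_integral_rpow_le_of_mem_Icc [IsProbabilityMeasure μ] {f : M → ℝ} {K q : ℝ}
    (hfK : ∀ x, f x ∈ Set.Icc 0 K) (hq : 0 < q) :
    (∫ x, f x ^ q ∂μ) ^ (1 / q) ≤ K := by
  have hK : 0 ≤ K := by
    obtain ⟨x⟩ := nonempty_of_isProbabilityMeasure μ
    exact (hfK x).1.trans (hfK x).2
  have hfq : ∀ x, ‖f x ^ q‖ ≤ K ^ q := fun x => by
    rw [Real.norm_of_nonneg (Real.rpow_nonneg (hfK x).1 q)]
    exact Real.rpow_le_rpow (hfK x).1 (hfK x).2 hq.le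
  have h := norm_integral_le_of_norm_le_const (μ := μ) (ae_of_all _ hfq)
  rw [probReal_univ, mul_one] at h
  rw [one_div, Real.rpow_inv_le_iff_of_pos (integral_nonneg fun x => Real.rpow_nonneg (hfK x).1 q)
    hK hq]
  exact (Real.le_norm_self _).trans h

end Lp

theorem transfer_Lq_bound {M : Type*} [MeasurableSpace M] (m : Measure M)
    (ρε ρ0 : M → ℝ) (hρεnn : ∀ x, 0 ≤ ρε x) (hρ0nn : ∀ x, 0 ≤ ρ0 x)
    (hmρε : Measurable ρε) (hmρ0 : Measurable ρ0)
    (νε ν0 : Measure M)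
    (hνε : νε = m.withDensity (fun x => ENNReal.ofReal (ρε x)))
    (hν0 : ν0 = m.withDensity (fun x => ENNReal.ofReal (ρ0 x)))
    (hpε : IsProbabilityMeasure νε) (hp0 : IsProbabilityMeasure ν0)
    (Rε : ℝ) (hR : Rε = ∫ x, |ρε x - ρ0 x| ∂m)
    (L q ε Sε : ℝ) (hL : 1 ≤ L) (hq : 1 ≤ q) (hε : 0 ≤ ε)
    (z δ : M → ℝ) (hzm : Measurable z) (hδm : Measurable δ)
    (hz : ∀ x, z x ∈ Set.Icc 0 (2 * L)) (hδ : ∀ x, δ x ∈ Set.Icc 0 (4 * L))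
    (hS0 : 0 ≤ Sε) (hS : Sε ≤ L * Rε + ε)
    (hbound : ∫ x, z x ^ q ∂νε ≤ (12 * Real.exp (2 * L)) ^ q * ∫ x, (δ x + Sε) ^ q ∂νε) :
    (∫ x, z x ^ q ∂ν0) ^ (1 / q) ≤
      24 * L * Real.exp (2 * L) *
        ((∫ x, δ x ^ q ∂νε) ^ (1 / q) + Rε ^ (1 / q) + ε) := by
  have hq0 : 0 < q := by linarith
  have hR0 : 0 ≤ Rε := hR ▸ integral_nonneg fun _ => abs_nonneg _
  have hE1 : 1 ≤ Real.exp (2 * L) := Real.one_le_exp (by linarith)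
  have hD0 : 0 ≤ (∫ x, δ x ^ q ∂νε) ^ (1 / q) :=
    Real.rpow_nonneg (integral_nonneg fun x => Real.rpow_nonneg (hδ x).1 q) _
  rcases le_or_gt Rε 1 with hR1 | hR1
  · have htransfer : (∫ x, z x ^ q ∂ν0) ^ (1 / q) ≤
        (∫ x, z x ^ q ∂νε) ^ (1 / q) + 2 * L * Rε ^ (1 / q) := by
      subst hνε hν0 hR
      exact rpow_one_div_integral_rpow_withDensity_ofReal_le_add hmρε hmρ0 hρεnn hρ0nn
        hzm.aemeasurable (by linarith) hz hq
    have hδLq : MemLp δ (ENNReal.ofReal q) νε :=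
      MemLp.of_bound hδm.aestronglyMeasurable (4 * L) (ae_of_all _ fun x => by
        rw [Real.norm_of_nonneg (hδ x).1]; exact (hδ x).2)
    have hzε : (∫ x, z x ^ q ∂νε) ^ (1 / q) ≤
        12 * Real.exp (2 * L) * ((∫ x, δ x ^ q ∂νε) ^ (1 / q) + Sε) := by
      refine (Real.rpow_le_rpow (integral_nonneg fun x => Real.rpow_nonneg (hz x).1 q) hbound
        (by positivity)).trans ?_
      rw [rpow_mul_rpow_one_div (by positivity)
        (integral_nonneg fun x => Real.rpow_nonneg (add_nonneg (hδ x).1 hS0) q) hq0.ne']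
      gcongr
      exact integral_rpow_add_const_le hq hδLq (fun x => (hδ x).1) hS0
    have hSR : Sε ≤ L * Rε ^ (1 / q) + ε :=
      hS.trans (by gcongr; exact Real.self_le_rpow_of_le_one hR0 hR1 ((div_le_one hq0).2 hq))
    have hR' : 0 ≤ Rε ^ (1 / q) := Real.rpow_nonneg hR0 _
    calc (∫ x, z x ^ q ∂ν0) ^ (1 / q)
        ≤ (∫ x, z x ^ q ∂νε) ^ (1 / q) + 2 * L * Rε ^ (1 / q) := htransfer
      _ ≤ 12 * Real.exp (2 * L) * ((∫ x, δ x ^ q ∂νε) ^ (1 / q) + (L * Rε ^ (1 / q) + ε))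
            + 2 * L * Rε ^ (1 / q) := by gcongr; exact hzε.trans (by gcongr)
      _ ≤ _ := by
        have h1 : 12 * Real.exp (2 * L) ≤ 24 * L * Real.exp (2 * L) := by nlinarith
        have h2 : 12 * Real.exp (2 * L) * L + 2 * L ≤ 24 * L * Real.exp (2 * L) := by nlinarith
        nlinarith [mul_le_mul_of_nonneg_right h1 hD0, mul_le_mul_of_nonneg_right h2 hR',
          mul_le_mul_of_nonneg_right h1 hε]
  · have hR'1 : 1 ≤ Rε ^ (1 / q) := Real.one_le_rpow hR1.le (by positivity)
    calc (∫ x, z x ^ q ∂ν0) ^ (1 / q) ≤ 2 * L := rpow_one_div_integral_rpow_le_of_mem_Icc hz hq0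
      _ ≤ 24 * L * Real.exp (2 * L) * 1 := by nlinarith
      _ ≤ _ := by gcongr; linarith
end

section
/- Consider the family of maps $T_\varepsilon : [0,1) \to [0,1)$, $T_\varepsilon y = 2y + \varepsilon^\beta \bmod 1$ where $\beta > 0$ is fixed, the observable $a(y) = \cos 2\pi y$, and the slow recursion $x_{n+1} = x_n + \varepsilon \cos(2\pi y_n)$, $x_0 = 0$, $y_{n+1} = T_\varepsilon y_n$. Then for every $y_0 \in [0,1)$, $\limsup_{\varepsilon \to 0} x_{[1/\varepsilon]} = 1$. -/
/-!
Modulo 1 the orbit is `y n ≡ 2 ^ n * (y₀ + ε ^ β) - ε ^ β`. Choose `ε` so that `y₀ + ε ^ β` is the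
dyadic rational of level `N` just above `y₀`; then `ε ^ β ≤ 2⁻¹ ^ N` and `y n ≡ -ε ^ β` for every
`n ≥ N`, so all but the first `N` terms of the sum equal `cos (2π ε ^ β) ≈ 1`. As `N ε → 0`, the
averages `ε * ∑ n < ⌊1/ε⌋, cos (2π y n)`, which never exceed `1`, tend to `1` along these `ε`.
-/

open Real Filter Topology

theorem limsup_eq_of_eventually_le_of_tendsto_comp {α ι β : Type*}
    [ConditionallyCompleteLinearOrder β] [TopologicalSpace β] [OrderTopology β]
    {l : Filter α} {u : Filter ι} [NeBot u] {f : α → β} {c : β} {e : ι → α}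
    (hle : ∀ᶠ x in l, f x ≤ c) (he : Tendsto e u l) (hfe : Tendsto (f ∘ e) u (𝓝 c)) :
    limsup f l = c := by
  have hcob : (map e u).IsCoboundedUnder (· ≤ ·) f := hfe.isCoboundedUnder_le
  refine le_antisymm (limsup_le_of_le (hcob.mono (map_mono he)) hle) ?_
  calc c = limsup (f ∘ e) u := hfe.limsup_eq.symm
    _ ≤ limsup f l := he.limsup_comp_le_limsup hcob ⟨c, hle⟩

theorem tendsto_mul_nat_floor_one_div_nhdsGT_zero :
    Tendsto (fun x : ℝ => x * ⌊1 / x⌋₊) (𝓝[>] 0) (𝓝 1) := by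
  refine (tendsto_nat_floor_div_atTop.comp tendsto_inv_nhdsGT_zero).congr fun x => ?_
  simp [div_eq_mul_inv, mul_comm]

theorem mul_sum_range_nat_floor_one_div_le_one {ε : ℝ} (hε : 0 < ε) (a : ℕ → ℝ)
    (ha : ∀ n, a n ≤ 1) : ε * ∑ n ∈ Finset.range ⌊1 / ε⌋₊, a n ≤ 1 := by
  calc ε * ∑ n ∈ Finset.range ⌊1 / ε⌋₊, a n ≤ ε * ⌊1 / ε⌋₊ := by
        gcongr
        simpa using Finset.sum_le_card_nsmul (Finset.range ⌊1 / ε⌋₊) a 1 fun n _ => ha n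
    _ ≤ ε * (1 / ε) := by gcongr; exact Nat.floor_le (by positivity)
    _ = 1 := mul_one_div_cancel hε.ne'

theorem mul_sub_mul_le_sum_range {a : ℕ → ℝ} {c d : ℝ} {N : ℕ} (hlow : ∀ n, c - d ≤ a n)
    (heq : ∀ n, N ≤ n → a n = c) (M : ℕ) :
    M * c - N * d ≤ ∑ n ∈ Finset.range M, a n := by
  have hd : 0 ≤ d := by linarith [hlow N, heq N le_rfl]
  suffices h : M * c - (min M N : ℕ) * d ≤ ∑ n ∈ Finset.range M, a n by
    have : ((min M N : ℕ) : ℝ) ≤ N := by exact_mod_cast min_le_right M N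
    nlinarith
  induction M with
  | zero => simp
  | succ M ih =>
    rw [Finset.sum_range_succ]
    rcases le_or_gt N M with hNM | hMN
    · rw [heq M hNM, min_eq_right (by omega : N ≤ M + 1)]
      rw [min_eq_right hNM] at ih
      push_cast
      linarith
    · rw [min_eq_left (by omega : M + 1 ≤ N)]
      rw [min_eq_left hMN.le] at ih
      push_cast
      linarith [hlow M]

section DoublingOrbit

variable {y : ℕ → ℝ} {y0 t : ℝ}

theorem exists_int_doubling_orbit_eq (hinit : y 0 = y0)
    (hrec : ∀ n, y (n + 1) = Int.fract (2 * y n + t)) (n : ℕ) :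
    ∃ k : ℤ, y n = 2 ^ n * (y0 + t) - t + k := by
  induction n with
  | zero => exact ⟨0, by simp [hinit]⟩
  | succ n ih =>
    obtain ⟨k, hk⟩ := ih
    refine ⟨2 * k - ⌊2 * y n + t⌋, ?_⟩
    rw [hrec, Int.fract, hk]
    push_cast
    ring

theorem cos_two_pi_mul_doubling_orbit_of_le {N : ℕ} {m : ℤ} (hm : 2 ^ N * (y0 + t) = m)
    (hinit : y 0 = y0) (hrec : ∀ n, y (n + 1) = Int.fract (2 * y n + t)) {n : ℕ} (hn : N ≤ n) :
    cos (2 * π * y n) = cos (2 * π * t) := by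
  obtain ⟨k, hk⟩ := exists_int_doubling_orbit_eq hinit hrec n
  have hy : y n = ((2 ^ (n - N) * m + k : ℤ) : ℝ) - t := by
    rw [hk, ← Nat.sub_add_cancel hn, pow_add, Nat.add_sub_cancel, mul_assoc, hm]
    push_cast
    ring
  rw [hy, ← cos_int_mul_two_pi_sub _ (2 ^ (n - N) * m + k)]
  ring_nf

theorem mul_sub_le_mul_sum_cos_doubling_orbit {ε : ℝ} (hε : 0 ≤ ε) {N : ℕ} {m : ℤ}
    (hm : 2 ^ N * (y0 + t) = m) (hinit : y 0 = y0)
    (hrec : ∀ n, y (n + 1) = Int.fract (2 * y n + t)) (M : ℕ) :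
    ε * M * cos (2 * π * t) - 2 * (N * ε) ≤ ε * ∑ n ∈ Finset.range M, cos (2 * π * y n) := by
  have h := mul_sub_mul_le_sum_range (d := 2)
    (fun n => by linarith [neg_one_le_cos (2 * π * y n), cos_le_one (2 * π * t)])
    (fun n hn => cos_two_pi_mul_doubling_orbit_of_le hm hinit hrec hn) M
  nlinarith

end DoublingOrbit

noncomputable def dyadicGap (x : ℝ) (N : ℕ) : ℝ := (⌊2 ^ N * x⌋ + 1) / 2 ^ N - x

namespace dyadicGap

variable (x : ℝ) (N : ℕ)

theorem two_pow_mul_add : 2 ^ N * (x + dyadicGap x N) = ((⌊2 ^ N * x⌋ + 1 : ℤ) : ℝ) := by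
  rw [dyadicGap]
  push_cast
  field_simp
  ring

theorem pos : 0 < dyadicGap x N := by
  have h := two_pow_mul_add x N
  push_cast at h
  nlinarith [Int.lt_floor_add_one (2 ^ N * x), pow_pos (two_pos : (0 : ℝ) < 2) N]

theorem le_inv_two_pow : dyadicGap x N ≤ 2⁻¹ ^ N := by
  have h := two_pow_mul_add x N
  push_cast at h
  have h2N : (0 : ℝ) < 2 ^ N := by positivity
  rw [inv_pow, ← one_div, le_div_iff₀ h2N]
  nlinarith [Int.floor_le (2 ^ N * x)]

theorem tendsto_zero : Tendsto (dyadicGap x) atTop (𝓝 0) :=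
  squeeze_zero (fun N => (pos x N).le) (le_inv_two_pow x)
    (tendsto_pow_atTop_nhds_zero_of_lt_one (by norm_num) (by norm_num))

theorem exists_rpow_inv_le_pow {β : ℝ} (hβ : 0 < β) :
    ∃ r : ℝ, 0 ≤ r ∧ r < 1 ∧ ∀ N, dyadicGap x N ^ β⁻¹ ≤ r ^ N := by
  refine ⟨2⁻¹ ^ β⁻¹, by positivity, rpow_lt_one (by norm_num) (by norm_num) (inv_pos.2 hβ),
    fun N => ?_⟩
  calc dyadicGap x N ^ β⁻¹ ≤ (2⁻¹ ^ N) ^ β⁻¹ :=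
        rpow_le_rpow (pos x N).le (le_inv_two_pow x N) (inv_nonneg.2 hβ.le)
    _ = (2⁻¹ ^ β⁻¹) ^ N := (rpow_pow_comm (by norm_num) _ _).symm

theorem tendsto_rpow_inv_nhdsGT_zero {β : ℝ} (hβ : 0 < β) :
    Tendsto (fun N => dyadicGap x N ^ β⁻¹) atTop (𝓝[>] 0) := by
  obtain ⟨r, hr0, hr1, hle⟩ := exists_rpow_inv_le_pow x hβ
  refine tendsto_nhdsWithin_iff.2 ⟨?_, Eventually.of_forall fun N => rpow_pos_of_pos (pos x N) _⟩
  exact squeeze_zero (fun N => (rpow_pos_of_pos (pos x N) _).le) hle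
    (tendsto_pow_atTop_nhds_zero_of_lt_one hr0 hr1)

theorem tendsto_nat_mul_rpow_inv {β : ℝ} (hβ : 0 < β) :
    Tendsto (fun N : ℕ => N * dyadicGap x N ^ β⁻¹) atTop (𝓝 0) := by
  obtain ⟨r, hr0, hr1, hle⟩ := exists_rpow_inv_le_pow x hβ
  exact squeeze_zero (fun N => by have := pos x N; positivity)
    (fun N => mul_le_mul_of_nonneg_left (hle N) N.cast_nonneg)
    (tendsto_self_mul_const_pow_of_lt_one hr0 hr1)

end dyadicGap

theorem no_almost_sure_averaging_general (β : ℝ) (hβ : 0 < β)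
    (y0 : ℝ)
    (y : ℝ → ℕ → ℝ)
    (hinit : ∀ ε, y ε 0 = y0)
    (hrec : ∀ ε n, y ε (n + 1) = Int.fract (2 * y ε n + ε ^ β)) :
    limsup (fun ε : ℝ => ε * ∑ n ∈ Finset.range ⌊1 / ε⌋₊, Real.cos (2 * π * y ε n))
      (nhdsWithin 0 (Set.Ioi 0)) = 1 := by
  set e : ℕ → ℝ := fun N => dyadicGap y0 N ^ β⁻¹
  have he := dyadicGap.tendsto_rpow_inv_nhdsGT_zero y0 hβ
  have hepos : ∀ N, 0 < e N := fun N => rpow_pos_of_pos (dyadicGap.pos y0 N) _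
  refine limsup_eq_of_eventually_le_of_tendsto_comp
    (eventually_mem_nhdsWithin.mono fun ε hε =>
      mul_sum_range_nat_floor_one_div_le_one hε _ fun n => cos_le_one _) he ?_
  have hlow : Tendsto (fun N => e N * ⌊1 / e N⌋₊ * cos (2 * π * dyadicGap y0 N) - 2 * (N * e N))
      atTop (𝓝 (1 * cos (2 * π * 0) - 2 * 0)) :=
    ((tendsto_mul_nat_floor_one_div_nhdsGT_zero.comp he).mul
      ((continuous_cos.comp (continuous_const.mul continuous_id)).continuousAt.tendsto.comp
        (dyadicGap.tendsto_zero y0))).sub ((dyadicGap.tendsto_nat_mul_rpow_inv y0 hβ).const_mul 2)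
  rw [mul_zero, cos_zero, mul_one, mul_zero, sub_zero] at hlow
  refine tendsto_of_tendsto_of_tendsto_of_le_of_le hlow tendsto_const_nhds (fun N => ?_)
    fun N => mul_sum_range_nat_floor_one_div_le_one (hepos N) _ fun n => cos_le_one _
  have hεβ : e N ^ β = dyadicGap y0 N := rpow_inv_rpow (dyadicGap.pos y0 N).le hβ.ne'
  exact mul_sub_le_mul_sum_cos_doubling_orbit (hepos N).le (dyadicGap.two_pow_mul_add y0 N)
    (hinit _) (fun n => hεβ ▸ hrec (e N) n) _

theorem no_almost_sure_averaging (β : ℝ) (hβ : 0 < β)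
    (y0 : ℝ) (hy0 : y0 ∈ Set.Ico (0:ℝ) 1)
    (y : ℝ → ℕ → ℝ)
    (hinit : ∀ ε, y ε 0 = y0)
    (hrec : ∀ ε n, y ε (n + 1) = Int.fract (2 * y ε n + ε ^ β)) :
    limsup (fun ε : ℝ => ε * ∑ n ∈ Finset.range ⌊1 / ε⌋₊, Real.cos (2 * π * y ε n))
      (nhdsWithin 0 (Set.Ioi 0)) = 1 :=
  no_almost_sure_averaging_general β hβ y0 y hinit hrec
end

section
/- Fix $\beta > 0$, $y_0 \in [0,1)$ and small $\delta > 0$. Set $N = [\delta^{-1/2}]$ and choose an integer $1 \leq k \leq 2^N$ with $y_0 \in [-\delta^\beta + (k-1)2^{-N}, -\delta^\beta + k 2^{-N}]$ (mod 1), and let $\varepsilon$ satisfy $y_0 = -\varepsilon^\beta + (k-1)2^{-N}$. Then $\delta^\beta - 2^{-N} \leq \varepsilon^\beta \leq \delta^\beta$; in particular if $\delta$ is small enough that $\delta^\beta > 2^{-[\delta^{-1/2}]}$ then $0 < \varepsilon \leq \delta$, and the orbit $y_n = 2^n y_0 + (2^n-1)\varepsilon^\beta \bmod 1$ of the doubling-plus-translation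 map satisfies $y_n = -\varepsilon^\beta \bmod 1$ for all $n \geq N$. -/
theorem counterexample_construction (β : ℝ) (hβ : 0 < β)
    (y0 : ℝ) (hy0 : y0 ∈ Set.Ico (0:ℝ) 1)
    (δ : ℝ) (hδ : 0 < δ) (N : ℕ) (hN : N = ⌊δ ^ (-(1:ℝ)/2)⌋₊)
    (k : ℕ) (hk1 : 1 ≤ k) (hk2 : k ≤ 2 ^ N)
    (hmem : -δ ^ β + ((k : ℝ) - 1) / 2 ^ N ≤ y0 ∧ y0 ≤ -δ ^ β + (k : ℝ) / 2 ^ N)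
    (ε : ℝ) (hε0 : 0 ≤ ε) (hεdef : y0 = -ε ^ β + ((k : ℝ) - 1) / 2 ^ N) :
    (δ ^ β - 1 / 2 ^ N ≤ ε ^ β ∧ ε ^ β ≤ δ ^ β) ∧
    (1 / 2 ^ N < δ ^ β → 0 < ε ∧ ε ≤ δ) ∧
    (∀ n : ℕ, N ≤ n →
      Int.fract ((2:ℝ) ^ n * y0 + ((2:ℝ) ^ n - 1) * ε ^ β) = Int.fract (-ε ^ β)) := by
  have h2N : (0:ℝ) < 2 ^ N := by positivity
  have hεβ : ε ^ β = ((k:ℝ) - 1) / 2 ^ N - y0 := by linarith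
  have hdiff : (k:ℝ) / 2 ^ N - ((k:ℝ) - 1) / 2 ^ N = 1 / 2 ^ N := by ring
  have hA : δ ^ β - 1 / 2 ^ N ≤ ε ^ β := by rw [hεβ]; linarith [hmem.2]
  have hB : ε ^ β ≤ δ ^ β := by rw [hεβ]; linarith [hmem.1]
  refine ⟨⟨hA, hB⟩, ?_, ?_⟩
  · intro h
    have hεpos : 0 < ε := by
      rcases lt_or_eq_of_le hε0 with h' | h'
      · exact h'
      · exfalso
        rw [← h', Real.zero_rpow (ne_of_gt hβ)] at hA
        linarith
    refine ⟨hεpos, ?_⟩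
    by_contra hc
    push_neg at hc
    have := Real.rpow_lt_rpow hδ.le hc hβ
    linarith
  · intro n hn
    have hsum : y0 + ε ^ β = ((k:ℝ) - 1) / 2 ^ N := by linarith
    have h2 : (2:ℝ) ^ n = 2 ^ (n - N) * 2 ^ N := by
      rw [← pow_add]; congr 1; omega
    calc Int.fract ((2:ℝ) ^ n * y0 + ((2:ℝ) ^ n - 1) * ε ^ β)
        = Int.fract (((((k:ℤ) - 1) * 2 ^ (n - N) : ℤ) : ℝ) + (-ε ^ β)) := by
          congr 1
          have : (2:ℝ) ^ n * y0 + ((2:ℝ) ^ n - 1) * ε ^ β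
              = 2 ^ n * (y0 + ε ^ β) - ε ^ β := by ring
          rw [this, hsum, h2]
          push_cast
          field_simp
          ring
      _ = Int.fract (-ε ^ β) := Int.fract_intCast_add _ _
end
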